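/- arXiv:2603.04451 — 3 statements merged into one kernel-verified Lean document; each statement's English description precedes it below -/
import Mathlib

section
/- Let λ be a random variable on a probability space and let A0(λ), A1(λ), B0(λ), B1(λ) ∈ {-1, +1} be deterministic functions of λ. Then the correlations C_ij = E[A_i(λ) B_j(λ)] satisfy C_00 + C_01 + C_10 - C_11 ≤ 2 and C_00 + C_01 + C_10 - C_11 ≥ -2. -/
open MeasureTheory

theorem chsh_lhv_pm_one {Ω : Type*} [MeasurableSpace Ω] (μ : Measure Ω)
    [IsProbabilityMeasure μ] (A0 A1 B0 B1 : Ω → ℝ)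
    (hA0 : Measurable A0) (hA1 : Measurable A1)
    (hB0 : Measurable B0) (hB1 : Measurable B1)
    (hA0v : ∀ ω, A0 ω = -1 ∨ A0 ω = 1) (hA1v : ∀ ω, A1 ω = -1 ∨ A1 ω = 1)
    (hB0v : ∀ ω, B0 ω = -1 ∨ B0 ω = 1) (hB1v : ∀ ω, B1 ω = -1 ∨ B1 ω = 1) :
    (∫ ω, A0 ω * B0 ω ∂μ) + (∫ ω, A0 ω * B1 ω ∂μ) +
      (∫ ω, A1 ω * B0 ω ∂μ) - (∫ ω, A1 ω * B1 ω ∂μ) ≤ 2 ∧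
    -2 ≤ (∫ ω, A0 ω * B0 ω ∂μ) + (∫ ω, A0 ω * B1 ω ∂μ) +
      (∫ ω, A1 ω * B0 ω ∂μ) - (∫ ω, A1 ω * B1 ω ∂μ) := by
  have hint : ∀ (f g : Ω → ℝ), Measurable f → Measurable g →
      (∀ ω, f ω = -1 ∨ f ω = 1) → (∀ ω, g ω = -1 ∨ g ω = 1) →
      Integrable (fun ω => f ω * g ω) μ := by
    intro f g hf hg hfv hgv
    refine (integrable_const (1 : ℝ)).mono' ((hf.mul hg).aestronglyMeasurable)
      (ae_of_all _ fun ω => ?_)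
    rcases hfv ω with h1 | h1 <;> rcases hgv ω with h2 | h2 <;>
      simp [h1, h2]
  have i00 := hint A0 B0 hA0 hB0 hA0v hB0v
  have i01 := hint A0 B1 hA0 hB1 hA0v hB1v
  have i10 := hint A1 B0 hA1 hB0 hA1v hB0v
  have i11 := hint A1 B1 hA1 hB1 hA1v hB1v
  have hcomb : (∫ ω, A0 ω * B0 ω ∂μ) + (∫ ω, A0 ω * B1 ω ∂μ) +
      (∫ ω, A1 ω * B0 ω ∂μ) - (∫ ω, A1 ω * B1 ω ∂μ) =
      ∫ ω, (A0 ω * B0 ω + A0 ω * B1 ω + A1 ω * B0 ω - A1 ω * B1 ω) ∂μ := by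
    have i0001 : Integrable (fun ω => A0 ω * B0 ω + A0 ω * B1 ω) μ := i00.add i01
    have i3 : Integrable (fun ω => A0 ω * B0 ω + A0 ω * B1 ω + A1 ω * B0 ω) μ := i0001.add i10
    rw [← integral_add i00 i01, ← integral_add i0001 i10, ← integral_sub i3 i11]
  have hbound : ∀ ω, |A0 ω * B0 ω + A0 ω * B1 ω + A1 ω * B0 ω - A1 ω * B1 ω| ≤ 2 := by
    intro ω
    rcases hA0v ω with h1 | h1 <;> rcases hA1v ω with h2 | h2 <;>
      rcases hB0v ω with h3 | h3 <;> rcases hB1v ω with h4 | h4 <;>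
      simp [h1, h2, h3, h4] <;> norm_num
  have hintS : Integrable (fun ω => A0 ω * B0 ω + A0 ω * B1 ω + A1 ω * B0 ω - A1 ω * B1 ω) μ :=
    by
    have i0001 : Integrable (fun ω => A0 ω * B0 ω + A0 ω * B1 ω) μ := i00.add i01
    have i3 : Integrable (fun ω => A0 ω * B0 ω + A0 ω * B1 ω + A1 ω * B0 ω) μ := i0001.add i10
    exact i3.sub i11
  rw [hcomb]
  constructor
  · calc ∫ ω, (A0 ω * B0 ω + A0 ω * B1 ω + A1 ω * B0 ω - A1 ω * B1 ω) ∂μ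
        ≤ ∫ _ω, (2 : ℝ) ∂μ := integral_mono hintS (integrable_const 2)
          (fun ω => (abs_le.mp (hbound ω)).2)
      _ = 2 := by simp
  · calc (-2 : ℝ) = ∫ _ω, (-2 : ℝ) ∂μ := by simp
      _ ≤ ∫ ω, (A0 ω * B0 ω + A0 ω * B1 ω + A1 ω * B0 ω - A1 ω * B1 ω) ∂μ :=
          integral_mono (integrable_const (-2)) hintS (fun ω => (abs_le.mp (hbound ω)).1)
end

section
/- There do not exist ±1-valued random variables A0, A1, B0, B1 defined on a common probability space such that E[A0 B0] = E[A0 B1] = E[A1 B0] = 1 and E[A1 B1] = -1. -/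
open MeasureTheory

theorem no_extremal_chsh_pattern :
    ¬ ∃ (Ω : Type) (_ : MeasurableSpace Ω) (μ : Measure Ω) (_ : IsProbabilityMeasure μ)
        (A0 A1 B0 B1 : Ω → ℝ),
      Measurable A0 ∧ Measurable A1 ∧ Measurable B0 ∧ Measurable B1 ∧
      (∀ ω, A0 ω = -1 ∨ A0 ω = 1) ∧ (∀ ω, A1 ω = -1 ∨ A1 ω = 1) ∧
      (∀ ω, B0 ω = -1 ∨ B0 ω = 1) ∧ (∀ ω, B1 ω = -1 ∨ B1 ω = 1) ∧
      (∫ ω, A0 ω * B0 ω ∂μ) = 1 ∧ (∫ ω, A0 ω * B1 ω ∂μ) = 1 ∧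
      (∫ ω, A1 ω * B0 ω ∂μ) = 1 ∧ (∫ ω, A1 ω * B1 ω ∂μ) = -1 := by
  rintro ⟨Ω, mΩ, μ, hμ, A0, A1, B0, B1, mA0, mA1, mB0, mB1,
    hA0, hA1, hB0, hB1, h00, h01, h10, h11⟩
  have hint : ∀ (f g : Ω → ℝ), Measurable f → Measurable g →
      (∀ ω, f ω = -1 ∨ f ω = 1) → (∀ ω, g ω = -1 ∨ g ω = 1) →
      Integrable (fun ω => f ω * g ω) μ := by
    intro f g mf mg hf hg
    refine (integrable_const (1 : ℝ)).mono' ((mf.mul mg).aestronglyMeasurable) ?_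
    filter_upwards with ω
    rcases hf ω with h | h <;> rcases hg ω with h' | h' <;> simp [h, h', abs_le]
  have i00 := hint A0 B0 mA0 mB0 hA0 hB0
  have i01 := hint A0 B1 mA0 mB1 hA0 hB1
  have i10 := hint A1 B0 mA1 mB0 hA1 hB0
  have i11 := hint A1 B1 mA1 mB1 hA1 hB1
  have hS : (∫ ω, (A0 ω * B0 ω + A0 ω * B1 ω + A1 ω * B0 ω - A1 ω * B1 ω) ∂μ) = 4 := by
    have e1 := integral_sub ((i00.add i01).add i10) i11
    have e2 := integral_add (i00.add i01) i10
    have e3 := integral_add i00 i01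
    simp only [Pi.add_apply] at e1 e2
    rw [e1, e2, e3, h00, h01, h10, h11]
    norm_num
  have hle : (∫ ω, (A0 ω * B0 ω + A0 ω * B1 ω + A1 ω * B0 ω - A1 ω * B1 ω) ∂μ)
      ≤ ∫ _ω, (2 : ℝ) ∂μ := by
    refine integral_mono (((i00.add i01).add i10).sub i11) (integrable_const 2) ?_
    intro ω
    rcases hA0 ω with h1 | h1 <;> rcases hA1 ω with h2 | h2 <;>
      rcases hB0 ω with h3 | h3 <;> rcases hB1 ω with h4 | h4 <;>
      simp [h1, h2, h3, h4] <;> norm_num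
  rw [hS, integral_const, probReal_univ] at hle
  norm_num at hle
end

section
/- If a probability distribution p over outcome quadruples (a0, a1, b0, b1) ∈ {-1,1}⁴ yields S(p) = Σ_p [a0 b0 + a0 b1 + a1 b0 - a1 b1] > 2, then p is not a valid probability distribution, i.e., no probability distribution on {-1,1}⁴ attains S > 2. -/
/-- Sign encoding of a Boolean outcome: `true ↦ 1`, `false ↦ -1`. -/
def sgn (b : Bool) : ℝ := if b then 1 else -1

theorem chsh_finite_distribution (p : Bool × Bool × Bool × Bool → ℝ)
    (hnonneg : ∀ q, 0 ≤ p q) (hsum : ∑ q : Bool × Bool × Bool × Bool, p q = 1) :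
    ¬ (∑ q : Bool × Bool × Bool × Bool,
        p q * (sgn q.1 * sgn q.2.2.1 + sgn q.1 * sgn q.2.2.2 +
          sgn q.2.1 * sgn q.2.2.1 - sgn q.2.1 * sgn q.2.2.2) > 2) := by
  simp only [not_lt]
  calc ∑ q : Bool × Bool × Bool × Bool,
        p q * (sgn q.1 * sgn q.2.2.1 + sgn q.1 * sgn q.2.2.2 +
          sgn q.2.1 * sgn q.2.2.1 - sgn q.2.1 * sgn q.2.2.2)
      ≤ ∑ q : Bool × Bool × Bool × Bool, p q * 2 := by
        apply Finset.sum_le_sum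
        intro q _
        apply mul_le_mul_of_nonneg_left _ (hnonneg q)
        obtain ⟨a, b, c, d⟩ := q
        cases a <;> cases b <;> cases c <;> cases d <;> norm_num [sgn]
    _ = 2 := by rw [← Finset.sum_mul, hsum, one_mul]
end
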